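/- Let $X, Y$ be compact metric spaces, $\mu \in \mathcal{P}(X)$, and $\Phi(x,y,\nu) = c(x,y) + F(\nu,y)$ with $c$ continuous and $F(\nu,\cdot)$ continuous for each $\nu$. Suppose $\gamma \in \mathcal{P}(X \times Y)$ is a Cournot-Nash equilibrium with second marginal $\nu$, i.e., $\gamma$-a.e. $(x,y)$ satisfies $c(x,y) + F(\nu,y) = \min_{z \in Y}[c(x,z) + F(\nu,z)]$. Then $\gamma$ is an optimal transport plan between its marginals $\mu$ and $\nu$ for the cost $\tilde c(x,y) = c(x,y) + F(\nu,y)$, i.e., $\int \tilde c \, d\gamma = \mathcal{T}_{\tilde c}(\mu, \nu)$. -/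

import Mathlib

open MeasureTheory Set

/-! The pair `u(x) = min_z c̃(x,z)`, `v = 0` is admissible for the dual of the transport problem:
`u(x) ≤ c̃(x,y)` everywhere. Integrating against any plan `η` with first marginal `μ` gives
`∫ u dμ ≤ ∫ c̃ dη`, while the equilibrium condition says `c̃ = u` holds `γ`-a.e., so `γ` attains
this lower bound. Compactness makes `u` continuous and everything integrable. -/

theorem continuous_iInf_of_compactSpace {α β γ : Type*} [TopologicalSpace β] [CompactSpace β]
    [TopologicalSpace γ] [ConditionallyCompleteLinearOrder α] [TopologicalSpace α]
    [OrderTopology α] {g : γ × β → α} (hg : Continuous g) :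
    Continuous fun x => ⨅ y, g (x, y) := by
  simpa only [image_univ, sInf_range] using
    isCompact_univ.continuous_sInf (f := fun x y => g (x, y)) hg

section

variable {X Y : Type*} [MeasurableSpace X] [MeasurableSpace Y] {μ : Measure X}
  {γ η : Measure (X × Y)} {g : X × Y → ℝ}

theorem integral_le_integral_of_comp_fst_le_of_ae_eq {u : X → ℝ}
    (hγ : γ.map Prod.fst = μ) (hη : η.map Prod.fst = μ) (hu : Integrable u μ)
    (hg : Integrable g η) (hug : ∀ p, u p.1 ≤ g p) (hγu : ∀ᵐ p ∂γ, g p = u p.1) :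
    ∫ p, g p ∂γ ≤ ∫ p, g p ∂η := by
  have integral_comp_fst {ρ : Measure (X × Y)} (hρ : ρ.map Prod.fst = μ) :
      ∫ p, u p.1 ∂ρ = ∫ x, u x ∂μ := by
    subst hρ
    exact (integral_map measurable_fst.aemeasurable hu.aestronglyMeasurable).symm
  have hu_η : Integrable (fun p => u p.1) η :=
    (hη ▸ hu).comp_aemeasurable measurable_fst.aemeasurable
  calc ∫ p, g p ∂γ = ∫ p, u p.1 ∂γ := integral_congr_ae hγu
    _ = ∫ p, u p.1 ∂η := by rw [integral_comp_fst hγ, integral_comp_fst hη]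
    _ ≤ ∫ p, g p ∂η := integral_mono hu_η hg hug

variable [TopologicalSpace X] [CompactSpace X] [OpensMeasurableSpace X]
  [TopologicalSpace Y] [CompactSpace Y] [OpensMeasurableSpace Y] [SecondCountableTopology Y]

theorem integral_le_integral_of_ae_eq_iInf [IsFiniteMeasure μ] (hg : Continuous g)
    (hγ : γ.map Prod.fst = μ) (hη : η.map Prod.fst = μ)
    (hγg : ∀ᵐ p ∂γ, g p = ⨅ y, g (p.1, y)) :
    ∫ p, g p ∂γ ≤ ∫ p, g p ∂η := by
  have : IsFiniteMeasure (η.map Prod.fst) := hη ▸ inferInstance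
  have : IsFiniteMeasure η := Measure.isFiniteMeasure_of_map measurable_fst.aemeasurable
  have hu := continuous_iInf_of_compactSpace hg
  have hg_bdd : BddBelow (range g) := (isCompact_range hg).bddBelow
  refine integral_le_integral_of_comp_fst_le_of_ae_eq hγ hη
    (hu.integrable_of_hasCompactSupport (.of_compactSpace _))
    (hg.integrable_of_hasCompactSupport (.of_compactSpace _)) (fun p => ?_) hγg
  exact ciInf_le (hg_bdd.mono (range_comp_subset_range _ g)) p.2

end

theorem stmt16_general {X Y : Type*}
    [MetricSpace X] [CompactSpace X] [MeasurableSpace X] [BorelSpace X]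
    [MetricSpace Y] [CompactSpace Y] [MeasurableSpace Y] [BorelSpace Y]
    (μ : Measure X) [IsProbabilityMeasure μ]
    (ν : Measure Y)
    (c : X → Y → ℝ) (hc : Continuous fun p : X × Y => c p.1 p.2)
    (F : Measure Y → Y → ℝ) (hF : Continuous (F ν))
    (γ : Measure (X × Y)) [IsProbabilityMeasure γ]
    (hγ1 : γ.map Prod.fst = μ) (hγ2 : γ.map Prod.snd = ν)
    (hCN : γ {p : X × Y | c p.1 p.2 + F ν p.2 = ⨅ z : Y, (c p.1 z + F ν z)} = 1) :
    ∫ p, (c p.1 p.2 + F ν p.2) ∂γ =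
      sInf {r : ℝ | ∃ η : Measure (X × Y),
        η.map Prod.fst = μ ∧ η.map Prod.snd = ν ∧
        r = ∫ p, (c p.1 p.2 + F ν p.2) ∂η} := by
  set g : X × Y → ℝ := fun p => c p.1 p.2 + F ν p.2
  have hg : Continuous g := hc.add (hF.comp continuous_snd)
  have hγg : ∀ᵐ p ∂γ, g p = ⨅ z, g (p.1, z) := by
    have hu : Continuous fun p : X × Y => ⨅ z, g (p.1, z) :=
      (continuous_iInf_of_compactSpace hg).comp continuous_fst
    refine (ae_iff_measure_eq ?_).2 (hCN.trans measure_univ.symm)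
    exact (measurableSet_eq_fun hg.measurable hu.measurable).nullMeasurableSet
  symm
  refine IsLeast.csInf_eq ⟨⟨γ, hγ1, hγ2, rfl⟩, ?_⟩
  rintro _ ⟨η, hη1, -, rfl⟩
  exact integral_le_integral_of_ae_eq_iInf hg hγ1 hη1 hγg

/-- A Cournot-Nash equilibrium `γ` is an optimal transport plan between its marginals for
the modified cost `c̃(x,y) = c(x,y) + F(ν,y)`. -/
theorem stmt16 {X Y : Type*}
    [MetricSpace X] [CompactSpace X] [MeasurableSpace X] [BorelSpace X]
    [MetricSpace Y] [CompactSpace Y] [MeasurableSpace Y] [BorelSpace Y] [Nonempty Y]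
    (μ : Measure X) [IsProbabilityMeasure μ]
    (ν : Measure Y) [IsProbabilityMeasure ν]
    (c : X → Y → ℝ) (hc : Continuous fun p : X × Y => c p.1 p.2)
    (F : Measure Y → Y → ℝ) (hF : Continuous (F ν))
    (γ : Measure (X × Y)) [IsProbabilityMeasure γ]
    (hγ1 : γ.map Prod.fst = μ) (hγ2 : γ.map Prod.snd = ν)
    (hCN : γ {p : X × Y | c p.1 p.2 + F ν p.2 = ⨅ z : Y, (c p.1 z + F ν z)} = 1) :
    ∫ p, (c p.1 p.2 + F ν p.2) ∂γ =
      sInf {r : ℝ | ∃ η : Measure (X × Y),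
        η.map Prod.fst = μ ∧ η.map Prod.snd = ν ∧
        r = ∫ p, (c p.1 p.2 + F ν p.2) ∂η} :=
  stmt16_general μ ν c hc F hF γ hγ1 hγ2 hCN
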